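/- Let m ≥ 1 and s ≥ 0 be integers, let 1 ≤ k_1 < k_2 < ⋯ < k_s ≤ m+s be integers, and let q be a real number with 0 < q < 1. Let E := {2, 4, …, 2m+2s} and O := {1, 3, …, 2m+2s+1} be the sets of even and odd numbers in [2m+2s+1], and set C := E ∖ {2k_1, …, 2k_s} and D := O ∪ {2k_1, …, 2k_s}. Then ▲(C) · ▲(D) = ▲(E) · ▲(O) · ∏_{1≤i<j≤s} (q^{2k_j} − q^{2k_i})² · ∏_{i=1}^{s} q^{3k_i} · (q−1)² · (q³;q²)_{k_i−1} · (q³;q²)_{m+s−k_i} / ((q²;q²)_{k_i−1} · (q²;q²)_{m+s−k_i}). -/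

import Mathlib

/-!
Splitting `▲` along a disjoint union `A ∪ B` leaves `▲(A) ▲(B)` times the factors
`q^max(a,b) - q^min(a,b)` linking `A` to `B`. With `K = {2k_i}` this writes
`▲(E) = ▲(C) ▲(K) ⋯` and `▲(D) = ▲(O) ▲(K) ⋯`, so everything reduces to the links of each
`2κ ∈ K`. Its links to `O` and to `E ∖ {2κ}` are explicit q-Pochhammer products whose quotient
is the `i`-th factor of the last product; its links to `K ∖ {2κ}`, collected over `K`,
give `▲(K)²`.
-/

open scoped Classical

/-- The shifted q-factorial `(a;q)_k = (1-a)(1-aq)⋯(1-aq^{k-1})`. -/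
noncomputable def qPoch (a q : ℝ) (k : ℕ) : ℝ := ∏ i ∈ Finset.range k, (1 - a * q ^ i)

/-- `▲(U) = ∏_{u < v in U} (q^v - q^u)`. -/
noncomputable def vand (q : ℝ) (U : Finset ℕ) : ℝ :=
  ∏ u ∈ U, ∏ v ∈ U.filter (fun v => u < v), (q ^ v - q ^ u)

open Finset

lemma qPoch_succ' (a Q : ℝ) (n : ℕ) : qPoch a Q (n + 1) = (1 - a) * qPoch (a * Q) Q n := by
  simp only [qPoch, prod_range_succ', pow_zero, mul_one, pow_succ', mul_assoc, mul_comm]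

lemma qPoch_ne_zero {a Q : ℝ} (ha : |a| < 1) (hQ : |Q| ≤ 1) (n : ℕ) : qPoch a Q n ≠ 0 := by
  refine prod_ne_zero_iff.mpr fun i _ => sub_ne_zero.mpr fun h => ?_
  have : |a * Q ^ i| < 1 := by
    rw [abs_mul, abs_pow]
    calc |a| * |Q| ^ i ≤ |a| * 1 := by gcongr; exact pow_le_one₀ (abs_nonneg Q) hQ
      _ < 1 := by linarith
  rw [← h, abs_one] at this
  exact lt_irrefl _ this

lemma prod_range_pow_sub_one (q : ℝ) (d c N : ℕ) :
    ∏ j ∈ range N, (q ^ (d + c * j) - 1) = (-1) ^ N * qPoch (q ^ d) (q ^ c) N := by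
  rw [qPoch, ← card_range N, ← prod_const, card_range, ← prod_mul_distrib]
  refine prod_congr rfl fun j _ => ?_
  rw [pow_add, pow_mul]
  ring

lemma prod_range_pow_add_sub_pow (q : ℝ) (x : ℕ → ℕ) (d c N : ℕ) :
    ∏ j ∈ range N, (q ^ (x j + (d + c * j)) - q ^ x j)
      = (-1) ^ N * q ^ (∑ j ∈ range N, x j) * qPoch (q ^ d) (q ^ c) N := by
  have hfactor : ∀ j, q ^ (x j + (d + c * j)) - q ^ x j = q ^ x j * (q ^ (d + c * j) - 1) :=
    fun j => by rw [pow_add]; ring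
  simp only [hfactor, prod_mul_distrib, prod_pow_eq_pow_sum, prod_range_pow_sub_one]
  ring

lemma prod_range_pow_add_rev_sub_pow (q : ℝ) (x : ℕ → ℕ) (d c N : ℕ) :
    ∏ j ∈ range N, (q ^ (x j + (d + c * (N - 1 - j))) - q ^ x j)
      = (-1) ^ N * q ^ (∑ j ∈ range N, x j) * qPoch (q ^ d) (q ^ c) N := by
  have hfactor : ∀ j, q ^ (x j + (d + c * (N - 1 - j))) - q ^ x j
      = q ^ x j * (q ^ (d + c * (N - 1 - j)) - 1) :=
    fun j => by rw [pow_add]; ring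
  simp only [hfactor, prod_mul_distrib, prod_pow_eq_pow_sum]
  rw [prod_range_reflect (fun j => q ^ (d + c * j) - 1), prod_range_pow_sub_one]
  ring

lemma prod_Icc_eq_prod_range {M : Type*} [CommMonoid M] (f : ℕ → M) (c N : ℕ) :
    ∏ i ∈ Icc (c + 1) (c + N), f i = ∏ i ∈ range N, f (c + 1 + i) := by
  rw [← Ico_add_one_right_eq_Icc, prod_Ico_eq_prod_range]
  congr 2
  omega

lemma sum_range_two_mul_add_one (n : ℕ) : ∑ i ∈ range n, (2 * i + 1) = n ^ 2 := by
  induction n with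
  | zero => rfl
  | succ n ih => rw [sum_range_succ, ih]; ring

lemma sum_range_two_mul_add_two (n : ℕ) : ∑ i ∈ range n, (2 * i + 2) = n ^ 2 + n := by
  induction n with
  | zero => rfl
  | succ n ih => rw [sum_range_succ, ih]; ring

lemma prod_prod_filter_lt_comm {M : Type*} [CommMonoid M] (A B : Finset ℕ)
    (f : ℕ → ℕ → M) :
    ∏ u ∈ A, ∏ v ∈ B.filter (u < ·), f u v = ∏ v ∈ B, ∏ u ∈ A.filter (· < v), f u v := by
  simp only [prod_filter]
  exact prod_comm

/-- The product of the factors of `▲` that link the point `b` to the points of `A`. -/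
noncomputable def vandCross (q : ℝ) (A : Finset ℕ) (b : ℕ) : ℝ :=
  ∏ a ∈ A, (q ^ max a b - q ^ min a b)

section Vandermonde

variable (q : ℝ)

lemma vandCross_eq_of_notMem {A : Finset ℕ} {b : ℕ} (hb : b ∉ A) :
    vandCross q A b
      = (∏ a ∈ A.filter (· < b), (q ^ b - q ^ a)) *
        ∏ a ∈ A.filter (b < ·), (q ^ a - q ^ b) := by
  have hA : A.filter (fun a => ¬ a < b) = A.filter (b < ·) :=
    filter_congr fun a ha => by have : a ≠ b := fun h => hb (h ▸ ha); omega
  rw [vandCross, ← prod_filter_mul_prod_filter_not A (· < b), hA]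
  congr 1 <;> refine prod_congr rfl fun a ha => ?_
  · have hab := (mem_filter.mp ha).2
    rw [max_eq_right hab.le, min_eq_left hab.le]
  · have hba := (mem_filter.mp ha).2
    rw [max_eq_left hba.le, min_eq_right hba.le]

lemma vand_union {A B : Finset ℕ} (hAB : Disjoint A B) :
    vand q (A ∪ B) = vand q A * vand q B * ∏ b ∈ B, vandCross q A b := by
  have hsplit : ∀ C : Finset ℕ,
      ∏ u ∈ C, ∏ v ∈ (A ∪ B).filter (u < ·), (q ^ v - q ^ u)
        = (∏ u ∈ C, ∏ v ∈ A.filter (u < ·), (q ^ v - q ^ u))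
          * ∏ u ∈ C, ∏ v ∈ B.filter (u < ·), (q ^ v - q ^ u) := fun C => by
    rw [← prod_mul_distrib]
    exact prod_congr rfl fun u _ => by
      rw [filter_union, prod_union (disjoint_filter_filter hAB)]
  have hcross : ∏ b ∈ B, vandCross q A b
      = (∏ u ∈ A, ∏ v ∈ B.filter (u < ·), (q ^ v - q ^ u))
        * ∏ u ∈ B, ∏ v ∈ A.filter (u < ·), (q ^ v - q ^ u) := by
    rw [prod_prod_filter_lt_comm, ← prod_mul_distrib]
    exact prod_congr rfl fun b hb => vandCross_eq_of_notMem q (disjoint_right.mp hAB hb)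
  rw [vand, prod_union hAB, hsplit, hsplit, hcross, vand, vand]
  ring

lemma vand_sq (U : Finset ℕ) : vand q U ^ 2 = ∏ b ∈ U, vandCross q (U.erase b) b := by
  have hsplit : ∀ b ∈ U, vandCross q (U.erase b) b
      = (∏ a ∈ U.filter (· < b), (q ^ b - q ^ a)) *
        ∏ a ∈ U.filter (b < ·), (q ^ a - q ^ b) :=
    fun b _ => by
      rw [vandCross_eq_of_notMem q (notMem_erase b U), filter_erase, filter_erase,
        erase_eq_of_notMem (by simp), erase_eq_of_notMem (by simp)]
  rw [prod_congr rfl hsplit, prod_mul_distrib, ← prod_prod_filter_lt_comm, sq, vand]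

lemma vand_image {S : Finset ℕ} {f : ℕ → ℕ} (hf : StrictMonoOn f S) :
    vand q (S.image f) = ∏ i ∈ S, ∏ j ∈ S.filter (i < ·), (q ^ f j - q ^ f i) := by
  rw [vand, prod_image hf.injOn]
  refine prod_congr rfl fun i hi => ?_
  rw [filter_image, prod_image (hf.injOn.mono (filter_subset _ _))]
  exact prod_congr (filter_congr fun j hj => hf.lt_iff_lt hi hj) fun _ _ => rfl

lemma vandCross_erase_eq_mul {E K : Finset ℕ} {b : ℕ} (hKE : K ⊆ E) (hb : b ∈ K) :
    vandCross q (E.erase b) b = vandCross q (E \ K) b * vandCross q (K.erase b) b := by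
  have hsplit : E.erase b = (E \ K) ∪ K.erase b := by
    ext x
    simp only [mem_erase, mem_sdiff, mem_union]
    constructor
    · rintro ⟨hxb, hxE⟩
      by_cases hxK : x ∈ K
      exacts [Or.inr ⟨hxb, hxK⟩, Or.inl ⟨hxE, hxK⟩]
    · rintro (⟨hxE, hxK⟩ | ⟨hxb, hxK⟩)
      exacts [⟨fun h => hxK (h ▸ hb), hxE⟩, ⟨hxb, hKE hxK⟩]
  rw [vandCross, hsplit, prod_union (sdiff_disjoint.mono_right (erase_subset b K))]
  rfl

end Vandermonde

/-- The even numbers `E` in `[2n+1]`. -/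
def evens (n : ℕ) : Finset ℕ := (Icc 1 n).image (fun i => 2 * i)

/-- The odd numbers `O` in `[2n+1]`. -/
def odds (n : ℕ) : Finset ℕ := (Icc 1 (n + 1)).image (fun i => 2 * i - 1)

/-- The factor by which the links of `2κ` to `odds n` exceed those to `evens n ∖ {2κ}`. -/
noncomputable def vandCrossRatio (q : ℝ) (n κ : ℕ) : ℝ :=
  q ^ (3 * κ) * (q - 1) ^ 2 * qPoch (q ^ 3) (q ^ 2) (κ - 1) * qPoch (q ^ 3) (q ^ 2) (n - κ) /
    (qPoch (q ^ 2) (q ^ 2) (κ - 1) * qPoch (q ^ 2) (q ^ 2) (n - κ))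

section Parity

variable (q : ℝ)

lemma vandCross_odds (a b : ℕ) :
    vandCross q (odds (a + b)) (2 * a)
      = (-1) ^ (a + b + 1) * q ^ (a ^ 2 + 2 * a * (b + 1)) *
        (qPoch q (q ^ 2) a * qPoch q (q ^ 2) (b + 1)) := by
  have hinj : Set.InjOn (fun i => 2 * i - 1) (Icc 1 (a + b + 1)) := fun i hi j hj h => by
    simp only [coe_Icc, Set.mem_Icc] at hi hj h
    omega
  have hsplit : Icc 1 (a + b + 1) = Icc (0 + 1) (0 + a) ∪ Icc (a + 1) (a + (b + 1)) := by
    ext; simp only [mem_Icc, mem_union]; omega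
  have hdisj : Disjoint (Icc (0 + 1) (0 + a)) (Icc (a + 1) (a + (b + 1))) :=
    disjoint_left.mpr fun i hi hi' => by simp only [mem_Icc] at hi hi'; omega
  rw [odds, vandCross, prod_image hinj, hsplit, prod_union hdisj, prod_Icc_eq_prod_range,
    prod_Icc_eq_prod_range]
  have hbelow : ∏ i ∈ range a,
        (q ^ max (2 * (0 + 1 + i) - 1) (2 * a) - q ^ min (2 * (0 + 1 + i) - 1) (2 * a))
      = ∏ i ∈ range a, (q ^ ((2 * i + 1) + (1 + 2 * (a - 1 - i))) - q ^ (2 * i + 1)) :=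
    prod_congr rfl fun i hi => by
      have := mem_range.mp hi
      congr 2 <;> omega
  have habove : ∏ j ∈ range (b + 1),
        (q ^ max (2 * (a + 1 + j) - 1) (2 * a) - q ^ min (2 * (a + 1 + j) - 1) (2 * a))
      = ∏ j ∈ range (b + 1), (q ^ (2 * a + (1 + 2 * j)) - q ^ (2 * a)) :=
    prod_congr rfl fun j _ => by congr 2 <;> omega
  rw [hbelow, habove, prod_range_pow_add_rev_sub_pow q (fun i => 2 * i + 1),
    prod_range_pow_add_sub_pow q (fun _ => 2 * a), sum_range_two_mul_add_one, sum_const,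
    card_range, smul_eq_mul, pow_one]
  ring

lemma vandCross_evens_erase (a b : ℕ) :
    vandCross q ((evens (a + 1 + b)).erase (2 * (a + 1))) (2 * (a + 1))
      = (-1) ^ (a + b) * q ^ (a ^ 2 + a + 2 * (a + 1) * b) *
        (qPoch (q ^ 2) (q ^ 2) a * qPoch (q ^ 2) (q ^ 2) b) := by
  have hinj : Function.Injective (fun i : ℕ => 2 * i) := fun i j h => by simp only at h; omega
  have hsplit : (Icc 1 (a + 1 + b)).erase (a + 1)
      = Icc (0 + 1) (0 + a) ∪ Icc (a + 1 + 1) (a + 1 + b) := by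
    ext; simp only [mem_erase, mem_Icc, mem_union]; omega
  have hdisj : Disjoint (Icc (0 + 1) (0 + a)) (Icc (a + 1 + 1) (a + 1 + b)) :=
    disjoint_left.mpr fun i hi hi' => by simp only [mem_Icc] at hi hi'; omega
  rw [evens, ← image_erase hinj, vandCross, prod_image hinj.injOn, hsplit, prod_union hdisj,
    prod_Icc_eq_prod_range, prod_Icc_eq_prod_range]
  have hbelow : ∏ i ∈ range a,
        (q ^ max (2 * (0 + 1 + i)) (2 * (a + 1)) - q ^ min (2 * (0 + 1 + i)) (2 * (a + 1)))
      = ∏ i ∈ range a, (q ^ ((2 * i + 2) + (2 + 2 * (a - 1 - i))) - q ^ (2 * i + 2)) :=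
    prod_congr rfl fun i hi => by
      have := mem_range.mp hi
      congr 2 <;> omega
  have habove : ∏ j ∈ range b,
        (q ^ max (2 * (a + 1 + 1 + j)) (2 * (a + 1)) -
          q ^ min (2 * (a + 1 + 1 + j)) (2 * (a + 1)))
      = ∏ j ∈ range b, (q ^ (2 * (a + 1) + (2 + 2 * j)) - q ^ (2 * (a + 1))) :=
    prod_congr rfl fun j _ => by congr 2 <;> omega
  rw [hbelow, habove, prod_range_pow_add_rev_sub_pow q (fun i => 2 * i + 2),
    prod_range_pow_add_sub_pow q (fun _ => 2 * (a + 1)), sum_range_two_mul_add_two, sum_const,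
    card_range, smul_eq_mul]
  ring

lemma vandCross_odds_eq {n κ : ℕ} (hκ : 1 ≤ κ) (hκn : κ ≤ n) (hq : |q| < 1) :
    vandCross q (odds n) (2 * κ)
      = vandCross q ((evens n).erase (2 * κ)) (2 * κ) * vandCrossRatio q n κ := by
  obtain ⟨a, rfl⟩ : ∃ a, κ = a + 1 := ⟨κ - 1, by omega⟩
  obtain ⟨b, rfl⟩ : ∃ b, n = a + 1 + b := ⟨n - (a + 1), by omega⟩
  have hq2 : |q ^ 2| < 1 := by rw [abs_pow]; exact pow_lt_one₀ (abs_nonneg q) hq two_ne_zero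
  have hpa := qPoch_ne_zero hq2 hq2.le a
  have hpb := qPoch_ne_zero hq2 hq2.le b
  rw [vandCross_odds, vandCross_evens_erase, vandCrossRatio, Nat.add_sub_cancel,
    Nat.add_sub_cancel_left, qPoch_succ', qPoch_succ', ← pow_succ']
  field_simp
  ring

end Parity

theorem triangle_product_odd_case_general (m s : ℕ)
    (k : ℕ → ℕ)
    (hk : ∀ i ∈ Finset.Icc 1 s, 1 ≤ k i ∧ k i ≤ m + s)
    (hkmono : ∀ i ∈ Finset.Icc 1 s, ∀ j ∈ Finset.Icc 1 s, i < j → k i < k j)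
    (q : ℝ) (hq0 : 0 < q) (hq1 : q < 1) :
    vand q (((Finset.Icc 1 (m + s)).image (fun i => 2 * i)) \
        ((Finset.Icc 1 s).image (fun i => 2 * k i))) *
      vand q (((Finset.Icc 1 (m + s + 1)).image (fun i => 2 * i - 1)) ∪
        ((Finset.Icc 1 s).image (fun i => 2 * k i)))
      = vand q ((Finset.Icc 1 (m + s)).image (fun i => 2 * i)) *
        vand q ((Finset.Icc 1 (m + s + 1)).image (fun i => 2 * i - 1)) *
        (∏ i ∈ Finset.Icc 1 s, ∏ j ∈ (Finset.Icc 1 s).filter (fun j => i < j),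
          (q ^ (2 * k j) - q ^ (2 * k i)) ^ 2) *
        ∏ i ∈ Finset.Icc 1 s,
          q ^ (3 * k i) * (q - 1) ^ 2 * qPoch (q ^ 3) (q ^ 2) (k i - 1) *
            qPoch (q ^ 3) (q ^ 2) (m + s - k i) /
            (qPoch (q ^ 2) (q ^ 2) (k i - 1) * qPoch (q ^ 2) (q ^ 2) (m + s - k i)) := by
  rw [← evens, ← odds]
  set K := (Icc 1 s).image (fun i => 2 * k i)
  have hmono : StrictMonoOn (fun i => 2 * k i) (Icc 1 s) := fun i hi j hj hij => by
    have := hkmono i hi j hj hij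
    simp only; omega
  have hKE : K ⊆ evens (m + s) := image_subset_iff.mpr fun i hi =>
    mem_image_of_mem (fun i => 2 * i) (mem_Icc.mpr (hk i hi))
  have hOK : Disjoint (odds (m + s)) K := disjoint_left.mpr fun x hxO hxK => by
    obtain ⟨i, hi, rfl⟩ := mem_image.mp hxO
    obtain ⟨j, -, hj⟩ := mem_image.mp hxK
    have := (mem_Icc.mp hi).1
    omega
  have hsq : ∏ i ∈ Icc 1 s, ∏ j ∈ (Icc 1 s).filter (fun j => i < j),
      (q ^ (2 * k j) - q ^ (2 * k i)) ^ 2 = vand q K ^ 2 := by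
    simp only [K, vand_image q hmono, prod_pow]
  have hcross : ∏ b ∈ K, vandCross q (odds (m + s)) b
      = (∏ b ∈ K, vandCross q (evens (m + s) \ K) b) * vand q K ^ 2 *
        ∏ i ∈ Icc 1 s, vandCrossRatio q (m + s) (k i) := by
    rw [vand_sq, ← prod_mul_distrib, prod_image hmono.injOn, prod_image hmono.injOn,
      ← prod_mul_distrib]
    refine prod_congr rfl fun i hi => ?_
    rw [vandCross_odds_eq q (hk i hi).1 (hk i hi).2 (abs_lt.mpr ⟨by linarith, hq1⟩),
      vandCross_erase_eq_mul q hKE (mem_image_of_mem _ hi)]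
  have hE := vand_union q (sdiff_disjoint : Disjoint (evens (m + s) \ K) K)
  rw [sdiff_union_of_subset hKE] at hE
  rw [vand_union q hOK, hE, hsq, hcross]
  unfold vandCrossRatio
  ring

theorem triangle_product_odd_case (m s : ℕ) (hm : 1 ≤ m)
    (k : ℕ → ℕ)
    (hk : ∀ i ∈ Finset.Icc 1 s, 1 ≤ k i ∧ k i ≤ m + s)
    (hkmono : ∀ i ∈ Finset.Icc 1 s, ∀ j ∈ Finset.Icc 1 s, i < j → k i < k j)
    (q : ℝ) (hq0 : 0 < q) (hq1 : q < 1) :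
    vand q (((Finset.Icc 1 (m + s)).image (fun i => 2 * i)) \
        ((Finset.Icc 1 s).image (fun i => 2 * k i))) *
      vand q (((Finset.Icc 1 (m + s + 1)).image (fun i => 2 * i - 1)) ∪
        ((Finset.Icc 1 s).image (fun i => 2 * k i)))
      = vand q ((Finset.Icc 1 (m + s)).image (fun i => 2 * i)) *
        vand q ((Finset.Icc 1 (m + s + 1)).image (fun i => 2 * i - 1)) *
        (∏ i ∈ Finset.Icc 1 s, ∏ j ∈ (Finset.Icc 1 s).filter (fun j => i < j),
          (q ^ (2 * k j) - q ^ (2 * k i)) ^ 2) *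
        ∏ i ∈ Finset.Icc 1 s,
          q ^ (3 * k i) * (q - 1) ^ 2 * qPoch (q ^ 3) (q ^ 2) (k i - 1) *
            qPoch (q ^ 3) (q ^ 2) (m + s - k i) /
            (qPoch (q ^ 2) (q ^ 2) (k i - 1) * qPoch (q ^ 2) (q ^ 2) (m + s - k i)) :=
  triangle_product_odd_case_general m s k hk hkmono q hq0 hq1
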